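/- arXiv:1005.2539 — 2 statements merged into one kernel-verified Lean document; each statement's English description precedes it below -/
import Mathlib

section
/- Let Γ, G₁, G₂ be groups, φ₁ : Γ → G₁ and φ₂ : Γ → G₂ group homomorphisms, H₁ ≤ G₁ and H₂ ≤ G₂ subgroups. Let X ⊆ G₁ be a complete set of representatives of the double cosets φ₁(Γ)\G₁/H₁, and for x ∈ X set Γ_x = φ₁^{-1}(x H₁ x^{-1}) ≤ Γ. Then there is a bijection from the double coset space Γ\(G₁ × G₂)/(H₁ × H₂) — where Γ acts on G₁ × G₂ on the left via (φ₁, φ₂) — to the disjoint union over x ∈ X of φ₂(Γ_x)\G₂/H₂, given by sending the class of (g₁, g₂) with g₁ = φ₁(τ)·x·h₁ (τ ∈ Γ, h₁ ∈ H₁) to the class of φ₂(τ)^{-1}·g₂ in φ₂(Γ_x)\G₂/H₂. -/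
/-- abstract form of Lemma 3.4. Given homomorphisms `φ₁ : Γ → G₁`,
`φ₂ : Γ → G₂`, subgroups `H₁ ≤ G₁`, `H₂ ≤ G₂`, and a complete set `X` of representatives
of the double cosets `φ₁(Γ)\G₁/H₁`, there is a bijection
`Γ\(G₁ × G₂)/(H₁ × H₂) ≃ ⨿_{x ∈ X} φ₂(Γ_x)\G₂/H₂`, where `Γ_x = φ₁⁻¹(xH₁x⁻¹)`,
sending the class of `(φ₁(τ)·x·h₁, g₂)` to the class of `φ₂(τ)⁻¹·g₂` in the
`x`-component. -/
theorem stmt9 {Γ G₁ G₂ : Type*} [Group Γ] [Group G₁] [Group G₂]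
    (φ₁ : Γ →* G₁) (φ₂ : Γ →* G₂) (H₁ : Subgroup G₁) (H₂ : Subgroup G₂)
    (X : Set G₁)
    (hX : ∀ g₁ : G₁, ∃! x : X, ∃ τ : Γ, ∃ h₁ ∈ H₁, g₁ = φ₁ τ * ↑x * h₁)
    (r₁ : G₁ × G₂ → G₁ × G₂ → Prop) (r₂ : X → G₂ → G₂ → Prop)
    (hr₁ : r₁ = fun p q => ∃ τ : Γ, ∃ h₁ ∈ H₁, ∃ h₂ ∈ H₂,
      q.1 = φ₁ τ * p.1 * h₁ ∧ q.2 = φ₂ τ * p.2 * h₂)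
    (hr₂ : r₂ = fun (x : X) a b => ∃ τ : Γ, (∃ h₁ ∈ H₁, φ₁ τ = (↑x : G₁) * h₁ * (↑x : G₁)⁻¹) ∧
      ∃ h₂ ∈ H₂, b = φ₂ τ * a * h₂) :
    ∃ e : Quot r₁ ≃ Σ x : X, Quot (r₂ x),
      ∀ (τ : Γ) (x : X) (h₁ : G₁), h₁ ∈ H₁ → ∀ g₂ : G₂,
        e (Quot.mk r₁ (φ₁ τ * ↑x * h₁, g₂)) = ⟨x, Quot.mk (r₂ x) ((φ₂ τ)⁻¹ * g₂)⟩ := by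
  classical
  choose xf τf h₁f h₁mem heq using fun g₁ => (hX g₁).exists
  have uniq : ∀ (g₁ : G₁) (x : X) (τ : Γ) (h₁ : G₁), h₁ ∈ H₁ → g₁ = φ₁ τ * ↑x * h₁ →
      x = xf g₁ := by
    intro g₁ x τ h₁ hm hg
    exact (hX g₁).unique ⟨τ, h₁, hm, hg⟩ ⟨τf g₁, h₁f g₁, h₁mem g₁, heq g₁⟩
  have mem₂ : ∀ (x : X) (σ : Γ) (h₁ : G₁), h₁ ∈ H₁ → φ₁ σ = ↑x * h₁ * (↑x : G₁)⁻¹ →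
      ∀ (a h₂ : G₂), h₂ ∈ H₂ → r₂ x a (φ₂ σ * a * h₂) := by
    subst hr₂
    intro x σ h₁ hm hφ a h₂ hm₂
    exact ⟨σ, ⟨h₁, hm, hφ⟩, h₂, hm₂, rfl⟩
  have key : ∀ (x : X) (τ τ' : Γ) (h₁ h₁' : G₁), h₁ ∈ H₁ → h₁' ∈ H₁ →
      φ₁ τ * ↑x * h₁ = φ₁ τ' * ↑x * h₁' → ∀ g₂ : G₂,
      Quot.mk (r₂ x) ((φ₂ τ)⁻¹ * g₂) = Quot.mk (r₂ x) ((φ₂ τ')⁻¹ * g₂) := by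
    intro x τ τ' h₁ h₁' hm hm' hEq g₂
    have hφ : φ₁ (τ'⁻¹ * τ) = ↑x * (h₁' * h₁⁻¹) * (↑x : G₁)⁻¹ := by
      have h : φ₁ τ = φ₁ τ' * ↑x * h₁' * h₁⁻¹ * (↑x : G₁)⁻¹ := by
        rw [← hEq]; group
      rw [map_mul, map_inv, h]; group
    have hrel := mem₂ x (τ'⁻¹ * τ) (h₁' * h₁⁻¹) (H₁.mul_mem hm' (H₁.inv_mem hm)) hφ
      ((φ₂ τ)⁻¹ * g₂) 1 H₂.one_mem
    have h2 : φ₂ (τ'⁻¹ * τ) * ((φ₂ τ)⁻¹ * g₂) * 1 = (φ₂ τ')⁻¹ * g₂ := by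
      rw [map_mul, map_inv]; group
    rw [h2] at hrel
    exact Quot.sound hrel
  let F : X → Γ → G₂ → Σ x : X, Quot (r₂ x) :=
    fun x τ g₂ => ⟨x, Quot.mk (r₂ x) ((φ₂ τ)⁻¹ * g₂)⟩
  let f : G₁ × G₂ → Σ x : X, Quot (r₂ x) := fun p => F (xf p.1) (τf p.1) p.2
  have main : ∀ (x : X) (τ : Γ) (h₁ : G₁), h₁ ∈ H₁ → ∀ g₂ : G₂,
      f (φ₁ τ * ↑x * h₁, g₂) = ⟨x, Quot.mk (r₂ x) ((φ₂ τ)⁻¹ * g₂)⟩ := by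
    intro x τ h₁ hm g₂
    have hx : x = xf (φ₁ τ * ↑x * h₁) := uniq _ x τ h₁ hm rfl
    show F (xf (φ₁ τ * ↑x * h₁)) (τf (φ₁ τ * ↑x * h₁)) g₂ = F x τ g₂
    rw [← hx]
    have hEq : φ₁ (τf (φ₁ τ * ↑x * h₁)) * ↑x * h₁f (φ₁ τ * ↑x * h₁) = φ₁ τ * ↑x * h₁ := by
      have h := heq (φ₁ τ * ↑x * h₁)
      rw [← hx] at h
      exact h.symm
    exact congrArg (fun q => (⟨x, q⟩ : Σ x : X, Quot (r₂ x)))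
      (key x _ τ _ h₁ (h₁mem _) hm hEq g₂)
  have fsound : ∀ p q, r₁ p q → f p = f q := by
    subst hr₁
    rintro ⟨g₁, g₂⟩ ⟨q₁, q₂⟩ ⟨τ, h₁, hm₁, h₂, hm₂, hq₁, hq₂⟩
    dsimp only at hq₁ hq₂
    subst hq₁; subst hq₂
    have hg : g₁ = φ₁ (τf g₁) * ↑(xf g₁) * h₁f g₁ := heq g₁
    have h1 : φ₁ τ * g₁ * h₁ = φ₁ (τ * τf g₁) * ↑(xf g₁) * (h₁f g₁ * h₁) := by
      rw [map_mul]; conv_lhs => rw [hg]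
      group
    rw [h1, main (xf g₁) (τ * τf g₁) (h₁f g₁ * h₁) (H₁.mul_mem (h₁mem g₁) hm₁) (φ₂ τ * g₂ * h₂)]
    show F (xf g₁) (τf g₁) g₂ = _
    have h2 : (φ₂ (τ * τf g₁))⁻¹ * (φ₂ τ * g₂ * h₂) = φ₂ 1 * ((φ₂ (τf g₁))⁻¹ * g₂) * h₂ := by
      rw [map_mul, map_one]; group
    rw [h2]
    exact congrArg (fun q => (⟨xf g₁, q⟩ : Σ x : X, Quot (r₂ x)))
      (Quot.sound (mem₂ (xf g₁) 1 1 H₁.one_mem (by simp) _ h₂ hm₂))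
  have gsound : ∀ (x : X) (a b : G₂), r₂ x a b →
      Quot.mk r₁ ((↑x : G₁), a) = Quot.mk r₁ ((↑x : G₁), b) := by
    intro x a b hab
    rw [hr₂] at hab
    obtain ⟨τ, ⟨h₁, hm₁, hφ⟩, h₂, hm₂, hb⟩ := hab
    apply Quot.sound
    rw [hr₁]
    refine ⟨τ, h₁⁻¹, H₁.inv_mem hm₁, h₂, hm₂, ?_, hb⟩
    show (↑x : G₁) = φ₁ τ * ↑x * h₁⁻¹
    rw [hφ]; group
  let gm : (Σ x : X, Quot (r₂ x)) → Quot r₁ := fun s =>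
    Quot.lift (fun a => Quot.mk r₁ ((↑s.1 : G₁), a)) (gsound s.1) s.2
  refine ⟨Equiv.mk (Quot.lift f fsound) gm ?_ ?_, ?_⟩
  · intro q
    induction q using Quot.ind with
    | _ p =>
      obtain ⟨g₁, g₂⟩ := p
      show Quot.mk r₁ ((↑(xf g₁) : G₁), (φ₂ (τf g₁))⁻¹ * g₂) = Quot.mk r₁ (g₁, g₂)
      apply Quot.sound
      rw [hr₁]
      exact ⟨τf g₁, h₁f g₁, h₁mem g₁, 1, H₂.one_mem, heq g₁, by group⟩
  · rintro ⟨x, q⟩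
    induction q using Quot.ind with
    | _ a =>
      show f ((↑x : G₁), a) = ⟨x, Quot.mk (r₂ x) a⟩
      have h1 : ((↑x : G₁), a) = ((φ₁ 1 * ↑x * 1 : G₁), a) := by simp
      rw [h1, main x 1 1 H₁.one_mem a]
      simp
  · intro τ x h₁ hm g₂
    exact main x τ h₁ hm g₂
end

section
/- Let M be a commutative ring, L an M-module, Γ a group acting on a set Y and on an M-module V (and trivially on L). Let Maps(Y, L) carry the Γ-action (γ·f)(y) = f(γ^{-1}y), and let Γ act on Hom_M(V, Maps(Y, L)) by (γ·φ)(v) = γ·(φ(γ^{-1}v)). Let X be a complete set of orbit representatives of Γ on Y, and for y ∈ X let Γ_y be the stabilizer of y. Then the map sending φ ∈ Hom_M(V, Maps(Y, L))^Γ to the family (φ_y)_{y∈X}, where φ_y(v) = φ(v)(y), is an M-module isomorphism Hom_M(V, Maps(Y, L))^Γ ≅ ⊕_{y ∈ X} Hom_M(V, L)^{Γ_y}. -/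
/-- The `M`-module of `Γ`-invariant `M`-linear maps `V →ₗ[M] Maps(Y, L)`, where
`(γ·φ)(v) = γ·(φ(γ⁻¹ v))` and `(γ·f)(y) = f(γ⁻¹ y)`. -/
def invHomMaps (M : Type*) [CommRing M] {Γ : Type*} [Group Γ] {V : Type*} [AddCommGroup V]
    [Module M V] (L : Type*) [AddCommGroup L] [Module M L] (Y : Type*) [MulAction Γ Y]
    (ρ : Representation M Γ V) : Submodule M (V →ₗ[M] (Y → L)) where
  carrier := {φ | ∀ (γ : Γ) (v : V) (y : Y), φ (ρ γ v) (γ • y) = φ v y}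
  add_mem' := by intro a b ha hb γ v y; simp [ha γ v y, hb γ v y]
  zero_mem' := by intro γ v y; simp
  smul_mem' := by intro c a ha γ v y; simp [ha γ v y]

/-- The `M`-module of `Γ_y`-invariant `M`-linear functionals `V →ₗ[M] L`, where
`Γ_y` is the stabilizer of `y ∈ Y`. -/
def invHomStab (M : Type*) [CommRing M] {Γ : Type*} [Group Γ] {V : Type*} [AddCommGroup V]
    [Module M V] (L : Type*) [AddCommGroup L] [Module M L] (Y : Type*) [MulAction Γ Y]
    (ρ : Representation M Γ V) (y : Y) : Submodule M (V →ₗ[M] L) where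
  carrier := {φ | ∀ γ ∈ MulAction.stabilizer Γ y, ∀ v : V, φ (ρ γ v) = φ v}
  add_mem' := by intro a b ha hb γ hγ v; simp [ha γ hγ v, hb γ hγ v]
  zero_mem' := by intro γ hγ v; simp
  smul_mem' := by intro c a ha γ hγ v; simp [ha γ hγ v]

/-- abstract content of Lemma 4.1. If `X` is a complete set of orbit
representatives of `Γ` on `Y`, evaluation at the representatives gives an `M`-module
isomorphism `Hom_M(V, Maps(Y, L))^Γ ≅ ⊕_{y ∈ X} Hom_M(V, L)^{Γ_y}`. -/
theorem stmt11 (M : Type*) [CommRing M] {Γ : Type*} [Group Γ] {V : Type*} [AddCommGroup V]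
    [Module M V] (L : Type*) [AddCommGroup L] [Module M L] (Y : Type*) [MulAction Γ Y]
    (ρ : Representation M Γ V) (X : Set Y) [Finite X]
    (hX : ∀ y : Y, ∃! x : X, ∃ γ : Γ, y = γ • (x : Y)) :
    ∃ e : invHomMaps M L Y ρ ≃ₗ[M] ((x : X) → invHomStab M L Y ρ (x : Y)),
      ∀ (φ : invHomMaps M L Y ρ) (x : X) (v : V),
        ((e φ x : V →ₗ[M] L)) v = ((φ : V →ₗ[M] (Y → L)) v) (x : Y) := by
  classical
  choose rep hspec huniq using hX
  choose g hg using hspec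
  -- key facts
  have repEq : ∀ (γ : Γ) (y : Y), rep (γ • y) = rep y := by
    intro γ y
    have : ∃ δ : Γ, γ • y = δ • ((rep y : X) : Y) := ⟨γ * g y, by rw [mul_smul, ← hg y]⟩
    exact (huniq (γ • y) (rep y) this).symm
  have repSelf : ∀ x : X, rep (x : Y) = x := by
    intro x
    exact (huniq (x : Y) x ⟨1, by simp⟩).symm
  have gSelf : ∀ x : X, g (x : Y) ∈ MulAction.stabilizer Γ (x : Y) := by
    intro x
    have h := hg (x : Y)
    rw [repSelf x] at h
    exact (h.symm : g (x : Y) • (x : Y) = (x : Y))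
  -- forward map on plain linear maps
  have memF : ∀ (φ : invHomMaps M L Y ρ) (x : X),
      ((LinearMap.funLeft M L (fun _ : Unit => (x : Y))).comp (φ : V →ₗ[M] (Y → L))) ∈
        (⊤ : Submodule M _) := fun _ _ => trivial
  -- define forward
  set F : invHomMaps M L Y ρ → ((x : X) → invHomStab M L Y ρ (x : Y)) := fun φ x =>
    ⟨{  toFun := fun v => (φ : V →ₗ[M] (Y → L)) v (x : Y)
        map_add' := fun a b => by simp
        map_smul' := fun c a => by simp },
      by
        intro γ hγ v
        have hγ' : γ • (x : Y) = (x : Y) := hγ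
        have := φ.2 γ v (x : Y)
        simpa [hγ'] using this⟩ with hF
  -- define backward
  set G : ((x : X) → invHomStab M L Y ρ (x : Y)) → invHomMaps M L Y ρ := fun f =>
    ⟨{  toFun := fun v y => (f (rep y) : V →ₗ[M] L) (ρ (g y)⁻¹ v)
        map_add' := fun a b => by funext y; simp
        map_smul' := fun c a => by funext y; simp },
      by
        intro γ v y
        have h1 : rep (γ • y) = rep y := repEq γ y
        have hstab : (g (γ • y))⁻¹ * (γ * g y) ∈ MulAction.stabilizer Γ ((rep y : X) : Y) := by
          have e1 : γ • y = g (γ • y) • ((rep (γ • y) : X) : Y) := hg (γ • y)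
          rw [h1] at e1
          have e2 : γ • y = (γ * g y) • ((rep y : X) : Y) := by
            rw [mul_smul, ← hg y]
          show ((g (γ • y))⁻¹ * (γ * g y)) • ((rep y : X) : Y) = ((rep y : X) : Y)
          rw [mul_smul, ← e2]
          have h3 := inv_smul_smul (g (γ • y)) ((rep y : X) : Y)
          rw [← e1] at h3
          exact h3
        show (f (rep (γ • y)) : V →ₗ[M] L) (ρ (g (γ • y))⁻¹ (ρ γ v)) =
          (f (rep y) : V →ₗ[M] L) (ρ (g y)⁻¹ v)
        rw [h1]
        have := (f (rep y)).2 _ hstab (ρ (g y)⁻¹ v)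
        calc (f (rep y) : V →ₗ[M] L) (ρ (g (γ • y))⁻¹ (ρ γ v))
            = (f (rep y) : V →ₗ[M] L) (ρ ((g (γ • y))⁻¹ * (γ * g y)) (ρ (g y)⁻¹ v)) := by
              have key : ∀ (a b : Γ) (w : V), ρ a (ρ b w) = ρ (a * b) w := fun a b w => by
                rw [map_mul]; rfl
              rw [key, key]
              congr 2
              group
          _ = (f (rep y) : V →ₗ[M] L) (ρ (g y)⁻¹ v) := this⟩ with hG
  refine ⟨{ toFun := F, invFun := G,
            map_add' := ?_, map_smul' := ?_, left_inv := ?_, right_inv := ?_ }, ?_⟩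
  · intro a b; funext x; apply Subtype.ext; apply LinearMap.ext; intro v; simp [hF]
  · intro c a; funext x; apply Subtype.ext; apply LinearMap.ext; intro v; simp [hF]
  · intro φ
    apply Subtype.ext; apply LinearMap.ext; intro v; funext y
    show ((φ : V →ₗ[M] (Y → L)) (ρ (g y)⁻¹ v)) ((rep y : X) : Y) = (φ : V →ₗ[M] (Y → L)) v y
    have := φ.2 (g y)⁻¹ v y
    have hy : (g y)⁻¹ • y = ((rep y : X) : Y) := by
      have h3 := inv_smul_smul (g y) ((rep y : X) : Y)
      rw [← hg y] at h3
      exact h3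
    rw [← hy]; exact this
  · intro f
    funext x
    apply Subtype.ext; apply LinearMap.ext; intro v
    show (f (rep (x : Y)) : V →ₗ[M] L) (ρ (g (x : Y))⁻¹ v) = (f x : V →ₗ[M] L) v
    have h1 := repSelf x
    rw [h1]
    exact (f x).2 _ (inv_mem (gSelf x)) v
  · intro φ x v; rfl
end
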